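/- arXiv:1407.5325 — 5 statements merged into one kernel-verified Lean document; each statement's English description precedes it below -/
import Mathlib

section
/- For each n ∈ ℕ, the set of bounded operators on a Hilbert space H of rank at most n is closed in the strong operator topology. -/
/-! `T` has rank at most `n` iff for every `v : Fin (n + 1) → H` the vectors `T (v i)` are
linearly dependent, i.e. iff their Gram determinant `det ⟪T (v i), T (v j)⟫` vanishes. For fixed
`v` this determinant is a continuous function of the finitely many vectors `T (v i)`, hence
SOT-continuous in `T`, so the set is an intersection of SOT-closed sets. -/

/-- The strong operator topology on `H →L[ℂ] H`: the topology of pointwise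
(norm) convergence, i.e. the topology induced by the inclusion into `H → H`
with the product topology. -/
noncomputable def sot (H : Type*) [NormedAddCommGroup H] [InnerProductSpace ℂ H] :
    TopologicalSpace (H →L[ℂ] H) :=
  TopologicalSpace.induced (fun T => (T : H → H)) Pi.topologicalSpace

theorem isClosed_setOf_not_linearIndependent {𝕜 E ι : Type*} [RCLike 𝕜] [NormedAddCommGroup E]
    [InnerProductSpace 𝕜 E] [Fintype ι] :
    IsClosed {v : ι → E | ¬ LinearIndependent 𝕜 v} := by
  classical
  have hgram : Continuous fun v : ι → E => (Matrix.gram 𝕜 v).det :=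
    .matrix_det <| continuous_matrix fun i j =>
      (continuous_apply i).inner (continuous_apply j)
  simpa only [← Matrix.det_gram_ne_zero_iff_linearIndependent, not_not] using
    isClosed_eq hgram continuous_const

theorem LinearMap.rank_range_le_natCast_iff {R M N : Type*} [Ring R] [Nontrivial R]
    [AddCommGroup M] [AddCommGroup N] [Module R M] [Module R N] (f : M →ₗ[R] N) (n : ℕ) :
    Module.rank R (LinearMap.range f) ≤ n ↔
      ∀ v : Fin (n + 1) → M, ¬ LinearIndependent R (f ∘ v) := by
  have hli (v : Fin (n + 1) → M) :
      LinearIndependent R (f.rangeRestrict ∘ v) ↔ LinearIndependent R (f ∘ v) :=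
    ((LinearMap.range f).subtype.linearIndependent_iff_of_injOn
      (LinearMap.range f).injective_subtype.injOn).symm
  rw [← not_iff_not, not_le, ← Order.succ_le_iff, Cardinal.succ_natCast, ← Nat.cast_succ,
    natCast_le_rank_iff]
  push Not
  constructor
  · rintro ⟨w, hw⟩
    obtain ⟨v, rfl⟩ : ∃ v, f.rangeRestrict ∘ v = w :=
      (Function.Surjective.comp_left f.surjective_rangeRestrict) w
    exact ⟨v, (hli v).1 hw⟩
  · rintro ⟨v, hv⟩
    exact ⟨_, (hli v).2 hv⟩

theorem stmt_10_general {H : Type*} [NormedAddCommGroup H] [InnerProductSpace ℂ H]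
    (n : ℕ) :
    @IsClosed (H →L[ℂ] H) (sot H)
      {T : H →L[ℂ] H | Module.rank ℂ (LinearMap.range (T : H →ₗ[ℂ] H)) ≤ n} := by
  let : TopologicalSpace (H →L[ℂ] H) := sot H
  have hcomp (v : Fin (n + 1) → H) : Continuous fun T : H →L[ℂ] H => T ∘ v :=
    continuous_pi fun i => (continuous_apply (v i)).comp continuous_induced_dom
  simp only [LinearMap.rank_range_le_natCast_iff, Set.ofPred_forall]
  exact isClosed_iInter fun v => isClosed_setOf_not_linearIndependent.preimage (hcomp v)

theorem stmt_10 {H : Type*} [NormedAddCommGroup H] [InnerProductSpace ℂ H]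
    [CompleteSpace H] (n : ℕ) :
    @IsClosed (H →L[ℂ] H) (sot H)
      {T : H →L[ℂ] H | Module.rank ℂ (LinearMap.range (T : H →ₗ[ℂ] H)) ≤ n} :=
  stmt_10_general n
end

section
/- The set of finite rank bounded operators on a separable Hilbert space H is an F_σ subset of B(H) in the strong operator topology. -/
theorem Module.finite_iff_exists_rank_le_nat {K M : Type*} [DivisionRing K] [AddCommGroup M]
    [Module K M] : Module.Finite K M ↔ ∃ n : ℕ, Module.rank K M ≤ n := by
  rw [← Module.rank_lt_aleph0_iff]
  refine ⟨fun h => ?_, fun ⟨n, hn⟩ => hn.trans_lt Cardinal.natCast_lt_aleph0⟩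
  obtain ⟨n, hn⟩ := Cardinal.lt_aleph0.1 h
  exact ⟨n, hn.le⟩

section PointwiseConvergence

variable {𝕜 : Type*} [NontriviallyNormedField 𝕜] [CompleteSpace 𝕜] {V F X : Type*}
  [AddCommGroup V] [Module 𝕜 V] [NormedAddCommGroup F] [NormedSpace 𝕜 F] [TopologicalSpace X]
  {f : X → V →ₗ[𝕜] F}

theorem isOpen_setOfPred_nat_le_rank_of_continuous_apply (hf : ∀ v, Continuous fun x => f x v)
    (n : ℕ) : IsOpen {x | ↑n ≤ (f x).rank} := by
  simp only [LinearMap.le_rank_iff_exists_linearIndependent_finset, Set.ofPred_exists,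
    ← exists_prop]
  refine isOpen_biUnion fun s _ => ?_
  have : Continuous fun x (v : (s : Set V)) => f x v := continuous_pi fun v => hf v
  exact isOpen_setOfPred_linearIndependent.preimage this

theorem isClosed_setOfPred_rank_le_nat_of_continuous_apply (hf : ∀ v, Continuous fun x => f x v)
    (n : ℕ) : IsClosed {x | (f x).rank ≤ n} := by
  simp only [← isOpen_compl_iff, Set.compl_ofPred, not_le, ← Cardinal.natCast_add_one_le_iff]
  exact_mod_cast isOpen_setOfPred_nat_le_rank_of_continuous_apply hf (n + 1)

end PointwiseConvergence

theorem stmt_12_general {H : Type*} [NormedAddCommGroup H] [InnerProductSpace ℂ H] :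
    ∃ C : ℕ → Set (H →L[ℂ] H), (∀ n, @IsClosed _ (sot H) (C n)) ∧
      {T : H →L[ℂ] H | FiniteDimensional ℂ (LinearMap.range (T : H →ₗ[ℂ] H))} = ⋃ n, C n := by
  refine ⟨fun n => {T | (T : H →ₗ[ℂ] H).rank ≤ n}, fun n => ?_, ?_⟩
  · let := sot H
    exact isClosed_setOfPred_rank_le_nat_of_continuous_apply
      (fun v => (continuous_apply v).comp continuous_induced_dom) n
  · ext T
    simp only [Set.mem_ofPred_eq, Set.mem_iUnion]
    exact Module.finite_iff_exists_rank_le_nat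

theorem stmt_12 {H : Type*} [NormedAddCommGroup H] [InnerProductSpace ℂ H]
    [CompleteSpace H] (e : HilbertBasis ℕ ℂ H) :
    ∃ C : ℕ → Set (H →L[ℂ] H), (∀ n, @IsClosed _ (sot H) (C n)) ∧
      {T : H →L[ℂ] H | FiniteDimensional ℂ (LinearMap.range (T : H →ₗ[ℂ] H))} = ⋃ n, C n :=
  stmt_12_general
end

section
/- Let P, Q be orthogonal projections on a Hilbert space H. The following are equivalent: (i) there exist finite-dimensional subspaces U, V of H with ran(P) ⊆ ran(Q) + U and ran(Q) ⊆ ran(P) + V; (ii) there exist finite-dimensional subspaces W ⊆ ran(P)^⊥ and Y ⊆ ran(Q)^⊥ with ran(P) + W = ran(Q) + Y; (iii) P - Q is a finite rank operator. -/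
/-!
(i) ⇒ (iii): `P - Q = (1 - Q) P - ((1 - P) Q)†`. If `ran P ⊆ ran Q + U`, then `(1 - Q)` kills
`ran Q`, so `ran ((1 - Q) P) ⊆ (1 - Q) U` is finite-dimensional; symmetrically `(1 - P) Q` has
finite rank, hence so does its adjoint: `ran T† = T† (ran T)` since `T†` vanishes on `(ran T)ᗮ`.

(iii) ⇒ (ii): with `F = ran (P - Q)`, take `W = (1 - P) F ⊆ ran Pᗮ` and
`Y = (1 - Q) F ⊆ ran Qᗮ`. Then `ran P + W = ran P + F = ran Q + F = ran Q + Y`, the middle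
equality because `P x = Q (P x) + (P - Q) (P x)` and symmetrically.
-/

open Submodule

namespace LinearMap

variable {R M : Type*} [Ring R] [AddCommGroup M] [Module R M]

theorem range_one_sub_mul_le_map_of_range_le_sup {p f : Module.End R M}
    (hp : IsIdempotentElem p) {U : Submodule R M} (h : range f ≤ range p ⊔ U) :
    range ((1 - p) * f) ≤ U.map (1 - p) := by
  have hp0 : (range p).map (1 - p) = ⊥ := by
    rw [← range_comp, ← Module.End.mul_eq_comp, hp.one_sub_mul_self, range_zero]
  calc range ((1 - p) * f) = (range f).map (1 - p) := by rw [Module.End.mul_eq_comp, range_comp]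
    _ ≤ (range p ⊔ U).map (1 - p) := map_mono h
    _ = U.map (1 - p) := by rw [Submodule.map_sup, hp0, bot_sup_eq]

theorem range_sub_le (f g : Module.End R M) : range (f - g) ≤ range f ⊔ range g := by
  rw [sub_eq_add_neg, ← range_neg g]
  exact range_add_le f (-g)

theorem range_sup_map_one_sub (f : Module.End R M) (F : Submodule R M) :
    range f ⊔ F.map (1 - f) = range f ⊔ F := by
  apply le_antisymm
  · refine sup_le le_sup_left ?_
    rintro _ ⟨x, hx, rfl⟩
    exact sub_mem (mem_sup_right hx) (mem_sup_left (mem_range_self f x))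
  · refine sup_le le_sup_left fun x hx => ?_
    rw [← add_sub_cancel (f x) x]
    exact add_mem (mem_sup_left (mem_range_self f x)) (mem_sup_right (mem_map_of_mem hx))

theorem range_le_range_sup_range_sub {p : Module.End R M} (hp : IsIdempotentElem p)
    (q : Module.End R M) : range p ≤ range q ⊔ range (p - q) := by
  rintro _ ⟨x, rfl⟩
  have : p x = q (p x) + (p - q) (p x) := by
    rw [sub_apply, ← Module.End.mul_apply p p, hp.eq, add_sub_cancel]
  rw [this]
  exact add_mem (mem_sup_left (mem_range_self q _)) (mem_sup_right (mem_range_self _ _))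

theorem range_sup_range_sub_comm {p q : Module.End R M} (hp : IsIdempotentElem p)
    (hq : IsIdempotentElem q) : range p ⊔ range (p - q) = range q ⊔ range (p - q) := by
  have hqp : range (q - p) = range (p - q) := by rw [← neg_sub, range_neg]
  apply le_antisymm
  · exact sup_le (range_le_range_sup_range_sub hp q) le_sup_right
  · exact sup_le (hqp ▸ range_le_range_sup_range_sub hq p) le_sup_right

end LinearMap

namespace ContinuousLinearMap

variable {𝕜 E F : Type*} [RCLike 𝕜] [NormedAddCommGroup E] [InnerProductSpace 𝕜 E]
  [CompleteSpace E] [NormedAddCommGroup F] [InnerProductSpace 𝕜 F] [CompleteSpace F]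

theorem finiteDimensional_range_adjoint (T : E →L[𝕜] F) [FiniteDimensional 𝕜 T.range] :
    FiniteDimensional 𝕜 (adjoint T).range := by
  have h : (adjoint T).range = T.range.map (adjoint T : F →ₗ[𝕜] E) := by
    rw [LinearMap.range_eq_map, ← sup_orthogonal_of_hasOrthogonalProjection (K := T.range),
      Submodule.map_sup, orthogonal_range, sup_eq_left]
    exact (map_comap_le _ ⊥).trans bot_le
  rw [h]
  infer_instance

theorem IsStarProjection.orthogonal_range_eq_range_one_sub {p : E →L[𝕜] E}
    (hp : IsStarProjection p) : p.rangeᗮ = LinearMap.range (1 - (p : E →ₗ[𝕜] E)) := by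
  rw [IsStarNormal.orthogonal_range hp.isSelfAdjoint.isStarNormal,
    LinearMap.IsIdempotentElem.ker_eq_range_one_sub
      (IsIdempotentElem.toLinearMap hp.isIdempotentElem)]

end ContinuousLinearMap

open ContinuousLinearMap in
theorem stmt_14 {H : Type*} [NormedAddCommGroup H] [InnerProductSpace ℂ H]
    [CompleteSpace H] (P Q : H →L[ℂ] H)
    (hP : P.comp P = P) (hP' : ContinuousLinearMap.adjoint P = P)
    (hQ : Q.comp Q = Q) (hQ' : ContinuousLinearMap.adjoint Q = Q) :
    List.TFAE
      [ (∃ U V : Submodule ℂ H, FiniteDimensional ℂ U ∧ FiniteDimensional ℂ V ∧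
          LinearMap.range (P : H →ₗ[ℂ] H) ≤ LinearMap.range (Q : H →ₗ[ℂ] H) ⊔ U ∧
          LinearMap.range (Q : H →ₗ[ℂ] H) ≤ LinearMap.range (P : H →ₗ[ℂ] H) ⊔ V),
        (∃ W Y : Submodule ℂ H, FiniteDimensional ℂ W ∧ FiniteDimensional ℂ Y ∧
          W ≤ (LinearMap.range (P : H →ₗ[ℂ] H))ᗮ ∧ Y ≤ (LinearMap.range (Q : H →ₗ[ℂ] H))ᗮ ∧
          LinearMap.range (P : H →ₗ[ℂ] H) ⊔ W = LinearMap.range (Q : H →ₗ[ℂ] H) ⊔ Y),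
        FiniteDimensional ℂ (LinearMap.range ((P - Q : H →L[ℂ] H) : H →ₗ[ℂ] H)) ] := by
  have hPproj : IsStarProjection P := ⟨hP, isSelfAdjoint_iff'.mpr hP'⟩
  have hQproj : IsStarProjection Q := ⟨hQ, isSelfAdjoint_iff'.mpr hQ'⟩
  have hPidem := hPproj.isIdempotentElem.toLinearMap
  have hQidem := hQproj.isIdempotentElem.toLinearMap
  tfae_have 1 → 3
  | ⟨U, V, _, _, hPU, hQV⟩ => by
    have hA : FiniteDimensional ℂ ((1 - Q) * P).range := by
      rw [toLinearMap_mul, toLinearMap_sub, toLinearMap_one]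
      exact finiteDimensional_of_le (LinearMap.range_one_sub_mul_le_map_of_range_le_sup hQidem hPU)
    have hB : FiniteDimensional ℂ ((1 - P) * Q).range := by
      rw [toLinearMap_mul, toLinearMap_sub, toLinearMap_one]
      exact finiteDimensional_of_le (LinearMap.range_one_sub_mul_le_map_of_range_le_sup hPidem hQV)
    have hB_adjoint := finiteDimensional_range_adjoint ((1 - P) * Q)
    have hPQ : P - Q = (1 - Q) * P - adjoint ((1 - P) * Q) := by
      rw [← star_eq_adjoint, star_mul, star_sub, star_one, hPproj.isSelfAdjoint.star_eq,
        hQproj.isSelfAdjoint.star_eq]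
      noncomm_ring
    rw [hPQ, toLinearMap_sub]
    exact finiteDimensional_of_le (LinearMap.range_sub_le _ _)
  tfae_have 3 → 2
  | hF => by
    refine ⟨(P - Q).range.map (1 - (P : H →ₗ[ℂ] H)), (P - Q).range.map (1 - (Q : H →ₗ[ℂ] H)),
      inferInstance, inferInstance,
      (LinearMap.map_le_range).trans hPproj.orthogonal_range_eq_range_one_sub.ge,
      (LinearMap.map_le_range).trans hQproj.orthogonal_range_eq_range_one_sub.ge, ?_⟩
    rw [LinearMap.range_sup_map_one_sub, LinearMap.range_sup_map_one_sub, toLinearMap_sub,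
      LinearMap.range_sup_range_sub_comm hPidem hQidem]
  tfae_have 2 → 1
  | ⟨W, Y, hW, hY, _, _, hEq⟩ => ⟨Y, W, hY, hW, hEq ▸ le_sup_left, hEq ▸ le_sup_left⟩
  tfae_finish
end

section
/- Let H be a Hilbert space with orthonormal basis (e_n) and P_α the projection onto the closed span of {e_{2n} + α_n e_{2n+1}} for α ∈ [0,1]^ℕ. If α, β ∈ [0,1]^ℕ and P_α - P_β is a compact operator, then α_n - β_n → 0. -/
/-- The orthogonal projection onto the closed linear span of
`{e (2n) + α n • e (2n+1) : n ∈ ℕ}`, viewed as an operator `H →L[ℂ] H`. -/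
noncomputable def Pproj {H : Type*} [NormedAddCommGroup H] [InnerProductSpace ℂ H]
    [CompleteSpace H] (e : HilbertBasis ℕ ℂ H) (α : ℕ → ℝ) : H →L[ℂ] H :=
  let S : Submodule ℂ H :=
    Submodule.span ℂ (Set.range fun n => e (2 * n) + ((α n : ℝ) : ℂ) • e (2 * n + 1))
  haveI : CompleteSpace S.topologicalClosure := S.isClosed_topologicalClosure.completeSpace_coe
  S.topologicalClosure.subtypeL.comp (Submodule.orthogonalProjection S.topologicalClosure)

open Filter

/-!
The projection `P_α` acts on each plane `span {e (2m), e (2m+1)}` separately and maps `e (2m)` to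
`(1 + α_m²)⁻¹ (e (2m) + α_m e (2m+1))`. The two coordinates of `(P_α - P_β) e (2m)` are
`(β_m² - α_m²) / D` and `(α_m - β_m)(1 - α_m β_m) / D` with `D ≤ 4`, and since
`(α_m + β_m) + (1 - α_m β_m) ≥ 1` this gives `|α_m - β_m| ≤ 8 ‖(P_α - P_β) e (2m)‖`.
Finally a compact operator maps an orthonormal sequence, which tends weakly to zero, to a
norm-null sequence.
-/

open Topology Set

section RealInequalities

variable {a b : ℝ}

theorem one_add_sq_mul_one_add_sq_le_four (ha : |a| ≤ 1) (hb : |b| ≤ 1) :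
    (1 + a ^ 2) * (1 + b ^ 2) ≤ 4 := by
  have := (sq_le_one_iff_abs_le_one a).2 ha
  have := (sq_le_one_iff_abs_le_one b).2 hb
  nlinarith

theorem abs_sub_mul_abs_add_le (ha : |a| ≤ 1) (hb : |b| ≤ 1) :
    |a - b| * |a + b| ≤ 4 * |(1 + a ^ 2)⁻¹ - (1 + b ^ 2)⁻¹| := by
  have hid : |a - b| * |a + b| =
      |(1 + a ^ 2)⁻¹ - (1 + b ^ 2)⁻¹| * ((1 + a ^ 2) * (1 + b ^ 2)) := by
    rw [← abs_of_pos (by positivity : 0 < (1 + a ^ 2) * (1 + b ^ 2)), ← abs_mul, ← abs_mul,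
      ← abs_neg]
    congr 1
    field_simp
    ring
  rw [hid, mul_comm 4]
  gcongr
  exact one_add_sq_mul_one_add_sq_le_four ha hb

theorem abs_sub_mul_abs_one_sub_mul_le (ha : |a| ≤ 1) (hb : |b| ≤ 1) :
    |a - b| * |1 - a * b| ≤ 4 * |a / (1 + a ^ 2) - b / (1 + b ^ 2)| := by
  have hid : |a - b| * |1 - a * b| =
      |a / (1 + a ^ 2) - b / (1 + b ^ 2)| * ((1 + a ^ 2) * (1 + b ^ 2)) := by
    rw [← abs_of_pos (by positivity : 0 < (1 + a ^ 2) * (1 + b ^ 2)), ← abs_mul, ← abs_mul]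
    congr 1
    field_simp
    ring
  rw [hid, mul_comm 4]
  gcongr
  exact one_add_sq_mul_one_add_sq_le_four ha hb

theorem abs_sub_le_of_mem_Icc (ha : a ∈ Icc (0 : ℝ) 1) (hb : b ∈ Icc (0 : ℝ) 1) :
    |a - b| ≤ 4 * (|(1 + a ^ 2)⁻¹ - (1 + b ^ 2)⁻¹| + |a / (1 + a ^ 2) - b / (1 + b ^ 2)|) := by
  obtain ⟨ha0, ha1⟩ := ha
  obtain ⟨hb0, hb1⟩ := hb
  have ha' : |a| ≤ 1 := abs_le.2 ⟨by linarith, ha1⟩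
  have hb' : |b| ≤ 1 := abs_le.2 ⟨by linarith, hb1⟩
  have hsum : 1 ≤ |a + b| + |1 - a * b| := by
    rw [abs_of_nonneg (by positivity), abs_of_nonneg (by nlinarith)]
    nlinarith
  nlinarith [abs_nonneg (a - b), abs_sub_mul_abs_add_le ha' hb',
    abs_sub_mul_abs_one_sub_mul_le ha' hb']

end RealInequalities

theorem MapClusterPt.eq_of_tendsto {X α : Type*} [TopologicalSpace X] [T2Space X] {F : Filter α}
    {u : α → X} {x y : X} (hx : MapClusterPt x F u) (hy : Tendsto u F (𝓝 y)) : x = y := by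
  by_contra hne
  exact (ClusterPt.mono hx hy).ne (disjoint_iff.1 (disjoint_nhds_nhds.2 hne))

section InnerProductSpace

variable {𝕜 E : Type*} [RCLike 𝕜] [NormedAddCommGroup E] [InnerProductSpace 𝕜 E]

theorem Orthonormal.tendsto_inner_right_cofinite {ι : Type*} {v : ι → E} (hv : Orthonormal 𝕜 v)
    (x : E) : Tendsto (fun i => inner 𝕜 x (v i)) cofinite (𝓝 0) := by
  have hsq : Tendsto (fun i => ‖inner 𝕜 (v i) x‖ ^ 2) cofinite (𝓝 0) :=
    (hv.inner_products_summable x).tendsto_cofinite_zero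
  rw [tendsto_zero_iff_norm_tendsto_zero]
  simpa [norm_inner_symm] using hsq.sqrt

/-- Any cluster point `y` of `T (v i)` satisfies `⟪y, y⟫ = lim ⟪T⋆ y, v i⟫ = 0`. -/
theorem IsCompactOperator.tendsto_apply_orthonormal_cofinite [CompleteSpace E] {F : Type*}
    [NormedAddCommGroup F] [InnerProductSpace 𝕜 F] {T : E →L[𝕜] F} (hT : IsCompactOperator T)
    {ι : Type*} {v : ι → E} (hv : Orthonormal 𝕜 v) :
    Tendsto (fun i => T (v i)) cofinite (𝓝 0) := by
  obtain ⟨K, hK, hTK⟩ := hT.image_closedBall_subset_compact 1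
  refine hK.tendsto_nhds_of_unique_mapClusterPt
    (Eventually.of_forall fun i => hTK ⟨v i, by simp [hv.1 i], rfl⟩) fun y _ hy => ?_
  set z := (InnerProductSpace.toDual 𝕜 E).symm ((innerSL 𝕜 y).comp T)
  have hz : Tendsto (fun i => inner 𝕜 y (T (v i))) cofinite (𝓝 0) := by
    simpa [z, InnerProductSpace.toDual_symm_apply] using hv.tendsto_inner_right_cofinite z
  have hyy : inner 𝕜 y y = (0 : 𝕜) :=
    (hy.tendsto_comp ((continuous_const.inner continuous_id).tendsto y)).eq_of_tendsto hz
  exact inner_self_eq_zero.1 hyy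

theorem Submodule.starProjection_closure_span_eq {ι : Type*} {u : ι → E}
    [(span 𝕜 (range u)).topologicalClosure.HasOrthogonalProjection] {x y : E}
    (hy : y ∈ span 𝕜 (range u)) (hxy : ∀ i, inner 𝕜 (u i) (x - y) = 0) :
    (span 𝕜 (range u)).topologicalClosure.starProjection x = y := by
  refine eq_starProjection_of_mem_orthogonal (le_topologicalClosure _ hy) ?_
  rw [orthogonal_closure]
  refine (isOrtho_span.2 ?_).ge (mem_span_singleton_self (x - y))
  rintro _ ⟨i, rfl⟩ _ rfl
  exact hxy i

end InnerProductSpace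

section Pproj

variable {H : Type*} [NormedAddCommGroup H] [InnerProductSpace ℂ H] [CompleteSpace H]
  (e : HilbertBasis ℕ ℂ H) (α : ℕ → ℝ) (m : ℕ)

theorem Pproj_apply_even :
    Pproj e α (e (2 * m)) =
      (1 + (α m : ℂ) ^ 2)⁻¹ • (e (2 * m) + (α m : ℂ) • e (2 * m + 1)) := by
  have hne : 1 + (α m : ℂ) ^ 2 ≠ 0 := by exact_mod_cast (by positivity : 1 + α m ^ 2 ≠ 0)
  have hon := orthonormal_iff_ite.mp e.orthonormal
  refine Submodule.starProjection_closure_span_eq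
    (Submodule.smul_mem _ _ (Submodule.subset_span ⟨m, rfl⟩)) fun k => ?_
  rcases eq_or_ne k m with rfl | hk
  · have : 2 * k ≠ 2 * k + 1 := by omega
    simp only [inner_sub_right, inner_add_left, inner_add_right, inner_smul_left,
      inner_smul_right, hon, Complex.conj_ofReal, this, this.symm, if_false]
    field_simp
    ring
  · have h₁ : 2 * k ≠ 2 * m := by omega
    have h₂ : 2 * k ≠ 2 * m + 1 := by omega
    have h₃ : 2 * k + 1 ≠ 2 * m := by omega
    have h₄ : 2 * k + 1 ≠ 2 * m + 1 := by omega
    simp only [inner_sub_right, inner_add_left, inner_add_right, inner_smul_left,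
      inner_smul_right, hon, h₁, h₂, h₃, h₄, if_false]
    ring

theorem inner_Pproj_apply_even_even :
    inner ℂ (e (2 * m)) (Pproj e α (e (2 * m))) = (((1 + α m ^ 2)⁻¹ : ℝ) : ℂ) := by
  have : 2 * m ≠ 2 * m + 1 := by omega
  simp only [Pproj_apply_even, inner_smul_right, inner_add_right,
    orthonormal_iff_ite.mp e.orthonormal, this, if_false]
  push_cast
  ring

theorem inner_Pproj_apply_even_odd :
    inner ℂ (e (2 * m + 1)) (Pproj e α (e (2 * m))) = ((α m / (1 + α m ^ 2) : ℝ) : ℂ) := by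
  have : 2 * m + 1 ≠ 2 * m := by omega
  simp only [Pproj_apply_even, inner_smul_right, inner_add_right,
    orthonormal_iff_ite.mp e.orthonormal, this, if_false]
  push_cast
  ring

theorem abs_sub_le_norm_Pproj_sub_apply_even (β : ℕ → ℝ) (hα : α m ∈ Icc (0 : ℝ) 1)
    (hβ : β m ∈ Icc (0 : ℝ) 1) :
    |α m - β m| ≤ 8 * ‖(Pproj e α - Pproj e β) (e (2 * m))‖ := by
  rw [sub_apply]
  have hcoord : ∀ j, ‖inner ℂ (e j) (Pproj e α (e (2 * m)) - Pproj e β (e (2 * m)))‖ ≤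
      ‖Pproj e α (e (2 * m)) - Pproj e β (e (2 * m))‖ := fun j =>
    (norm_inner_le_norm _ _).trans (by simp [e.orthonormal.1 j])
  have h₁ := hcoord (2 * m)
  have h₂ := hcoord (2 * m + 1)
  rw [inner_sub_right, inner_Pproj_apply_even_even, inner_Pproj_apply_even_even,
    ← Complex.ofReal_sub, Complex.norm_real, Real.norm_eq_abs] at h₁
  rw [inner_sub_right, inner_Pproj_apply_even_odd, inner_Pproj_apply_even_odd,
    ← Complex.ofReal_sub, Complex.norm_real, Real.norm_eq_abs] at h₂
  linarith [abs_sub_le_of_mem_Icc hα hβ]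

end Pproj

theorem stmt_17 {H : Type*} [NormedAddCommGroup H] [InnerProductSpace ℂ H]
    [CompleteSpace H] (e : HilbertBasis ℕ ℂ H)
    (α β : ℕ → ℝ) (hα : ∀ n, α n ∈ Set.Icc (0:ℝ) 1) (hβ : ∀ n, β n ∈ Set.Icc (0:ℝ) 1)
    (h : IsCompactOperator (Pproj e α - Pproj e β)) :
    Tendsto (fun n => α n - β n) atTop (nhds 0) := by
  have hnull : Tendsto (fun n => (Pproj e α - Pproj e β) (e n)) atTop (𝓝 0) := by
    simpa [Nat.cofinite_eq_atTop] using h.tendsto_apply_orthonormal_cofinite e.orthonormal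
  have heven : Tendsto (fun m => (Pproj e α - Pproj e β) (e (2 * m))) atTop (𝓝 0) :=
    hnull.comp (tendsto_id.const_mul_atTop' two_pos)
  refine squeeze_zero_norm (fun m => ?_) (by simpa using heven.norm.const_mul 8)
  exact abs_sub_le_norm_Pproj_sub_apply_even e α m β (hα m) (hβ m)
end

section
/- The set of projections of infinite rank and infinite corank is a dense G_δ subset of the space P(H) of all projections on H with the strong operator topology. -/
/-!
`rank T ≥ n` is witnessed by finitely many vectors `v` with `T v` linearly independent, and
linear independence of finitely many vectors is an open condition; hence `{rank T ≥ n}` is open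
for the strong topology. Since the corank of a projection `P` is the rank of `1 - P`, the
projections of infinite rank and corank form a countable intersection of open sets.

A strong neighbourhood of `P` only constrains `P` on a finite set `I`. Put the vectors `P x`
(`x ∈ I`) into a closed subspace `U` and the vectors `x - P x` into `Uᗮ`, and let `U` and `Uᗮ`
each absorb half of an orthonormal sequence orthogonal to `I ∪ P I`: the projection onto `U`
agrees with `P` on `I` and has infinite rank and corank.
-/

section Rank

variable {X 𝕜 E F : Type*} [TopologicalSpace X] [NontriviallyNormedField 𝕜] [CompleteSpace 𝕜]
  [NormedAddCommGroup E] [NormedSpace 𝕜 E] [NormedAddCommGroup F] [NormedSpace 𝕜 F]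

theorem isOpen_setOf_nat_le_rank_of_continuous_apply {T : X → E →ₗ[𝕜] F}
    (hT : ∀ x, Continuous fun p => T p x) (n : ℕ) : IsOpen {p | ↑n ≤ (T p).rank} := by
  simp only [LinearMap.le_rank_iff_exists_linearIndependent_finset, Set.ofPred_exists,
    ← exists_prop]
  exact isOpen_biUnion fun s _ =>
    isOpen_setOfPred_linearIndependent.preimage (continuous_pi fun x : s => hT x)

theorem isGδ_setOf_not_finiteDimensional_range_of_continuous_apply {T : X → E →ₗ[𝕜] F}
    (hT : ∀ x, Continuous fun p => T p x) :
    IsGδ {p | ¬ FiniteDimensional 𝕜 (LinearMap.range (T p))} := by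
  have : {p | ¬ FiniteDimensional 𝕜 (LinearMap.range (T p))} =
      ⋂ n : ℕ, {p | ↑n ≤ (T p).rank} := by
    ext p
    simp [LinearMap.rank, ← Cardinal.aleph0_le, ← Module.rank_lt_aleph0_iff]
  rw [this]
  exact IsGδ.iInter_of_isOpen (isOpen_setOf_nat_le_rank_of_continuous_apply hT)

theorem isGδ_setOf_not_finiteDimensional_range_and_ker_of_continuous_apply
    {T : X → Module.End 𝕜 E} (hT : ∀ x, Continuous fun p => T p x)
    (hidem : ∀ p, IsIdempotentElem (T p)) :
    IsGδ {p | ¬ FiniteDimensional 𝕜 (LinearMap.range (T p)) ∧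
      ¬ FiniteDimensional 𝕜 (LinearMap.ker (T p))} := by
  rw [show {p | ¬ FiniteDimensional 𝕜 (LinearMap.range (T p)) ∧
      ¬ FiniteDimensional 𝕜 (LinearMap.ker (T p))} =
      {p | ¬ FiniteDimensional 𝕜 (LinearMap.range (T p))} ∩
        {p | ¬ FiniteDimensional 𝕜 (LinearMap.range (1 - T p))} from
    Set.ext fun p => and_congr_right fun _ => by
      rw [LinearMap.IsIdempotentElem.ker_eq_range_one_sub (hidem p)]; rfl]
  refine (isGδ_setOf_not_finiteDimensional_range_of_continuous_apply hT).inter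
    (isGδ_setOf_not_finiteDimensional_range_of_continuous_apply fun x => ?_)
  simp only [LinearMap.sub_apply, Module.End.one_apply]
  exact continuous_const.sub (hT x)

end Rank

theorem dense_induced_pi_of_forall_finset {X α β : Type*} [TopologicalSpace β] (g : X → α → β)
    {S : Set X} (h : ∀ p (I : Finset α), ∃ q ∈ S, ∀ x ∈ I, g q x = g p x) :
    @Dense X (TopologicalSpace.induced g Pi.topologicalSpace) S := by
  let _ := TopologicalSpace.induced g Pi.topologicalSpace
  rw [dense_iff_inter_open]
  rintro _ ⟨O, hO, rfl⟩ ⟨p, hp⟩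
  obtain ⟨I, u, hu, hIu⟩ := isOpen_pi_iff.mp hO _ hp
  obtain ⟨q, hqS, hq⟩ := h p I
  exact ⟨q, hIu fun x hx => hq x hx ▸ (hu x hx).2, hqS⟩

theorem Submodule.not_finiteDimensional_of_linearIndependent {K M ι : Type*} [DivisionRing K]
    [AddCommGroup M] [Module K M] [Infinite ι] {v : ι → M} (hv : LinearIndependent K v)
    {p : Submodule K M} (hp : ∀ i, v i ∈ p) : ¬ FiniteDimensional K p :=
  fun _ => Module.Finite.not_linearIndependent_of_infinite (fun i => (⟨v i, hp i⟩ : p))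
    (LinearIndependent.of_comp p.subtype hv)

section InnerProduct

variable {𝕜 E : Type*} [RCLike 𝕜] [NormedAddCommGroup E] [InnerProductSpace 𝕜 E]

theorem Submodule.not_finiteDimensional_orthogonal (hE : ¬ FiniteDimensional 𝕜 E)
    (K : Submodule 𝕜 E) [FiniteDimensional 𝕜 K] : ¬ FiniteDimensional 𝕜 Kᗮ := by
  intro _
  have : FiniteDimensional 𝕜 (K ⊔ Kᗮ : Submodule 𝕜 E) := inferInstance
  rw [K.sup_orthogonal_of_hasOrthogonalProjection] at this
  exact hE (Module.Finite.equiv Submodule.topEquiv)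

theorem exists_orthonormal_nat [CompleteSpace E] (hE : ¬ FiniteDimensional 𝕜 E) :
    ∃ f : ℕ → E, Orthonormal 𝕜 f := by
  obtain ⟨w, b, -⟩ := exists_hilbertBasis 𝕜 E
  have : Infinite w := by
    by_contra hw
    have : Fintype w := @Fintype.ofFinite _ (not_infinite_iff_finite.mp hw)
    exact hE (Module.Finite.of_basis b.toOrthonormalBasis.toBasis)
  let emb := Infinite.natEmbedding w
  exact ⟨b ∘ emb, b.orthonormal.comp emb emb.injective⟩

theorem Submodule.exists_orthonormal_nat_mem_orthogonal [CompleteSpace E]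
    (hE : ¬ FiniteDimensional 𝕜 E) (K : Submodule 𝕜 E) [FiniteDimensional 𝕜 K] :
    ∃ f : ℕ → E, Orthonormal 𝕜 f ∧ ∀ n, f n ∈ Kᗮ := by
  obtain ⟨f, hf⟩ := exists_orthonormal_nat (K.not_finiteDimensional_orthogonal hE)
  exact ⟨Kᗮ.subtypeₗᵢ ∘ f, hf.comp_linearIsometry _, fun n => (f n).2⟩

theorem Submodule.exists_le_le_orthogonal_not_finiteDimensional [CompleteSpace E]
    (hE : ¬ FiniteDimensional 𝕜 E) {A B : Submodule 𝕜 E} [FiniteDimensional 𝕜 A]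
    [FiniteDimensional 𝕜 B] (hAB : A ⟂ B) :
    ∃ U : Submodule 𝕜 E, ∃ _ : U.HasOrthogonalProjection,
      A ≤ U ∧ B ≤ Uᗮ ∧ ¬ FiniteDimensional 𝕜 U ∧ ¬ FiniteDimensional 𝕜 Uᗮ := by
  obtain ⟨f, hf, hfAB⟩ := (A ⊔ B).exists_orthonormal_nat_mem_orthogonal hE
  set O := span 𝕜 (Set.range fun n => f (2 * n + 1))
  have hOA : O ⟂ A := by
    rw [isOrtho_iff_le, span_le]
    rintro _ ⟨n, rfl⟩
    exact orthogonal_le le_sup_left (hfAB _)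
  have hEvenO : span 𝕜 (Set.range fun n => f (2 * n)) ⟂ O := by
    rw [isOrtho_span]
    rintro _ ⟨m, rfl⟩ _ ⟨k, rfl⟩
    exact hf.2 (by omega)
  have hEven (n : ℕ) : f (2 * n) ∈ (B ⊔ O)ᗮ := by
    rw [← inf_orthogonal]
    exact ⟨orthogonal_le le_sup_right (hfAB _), isOrtho_iff_le.mp hEvenO (subset_span ⟨n, rfl⟩)⟩
  have hOdd (n : ℕ) : f (2 * n + 1) ∈ (B ⊔ O)ᗮᗮ :=
    le_orthogonal_orthogonal _ (mem_sup_right (subset_span ⟨n, rfl⟩))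
  refine ⟨(B ⊔ O)ᗮ, inferInstance, ?_, le_sup_left.trans (le_orthogonal_orthogonal _), ?_, ?_⟩
  · exact isOrtho_iff_le.mp (isOrtho_sup_right.mpr ⟨hAB, hOA.symm⟩)
  · exact not_finiteDimensional_of_linearIndependent
      (hf.comp (2 * ·) fun a b h => by dsimp only at h; omega).linearIndependent hEven
  · exact not_finiteDimensional_of_linearIndependent
      (hf.comp (2 * · + 1) fun a b h => by dsimp only at h; omega).linearIndependent hOdd

theorem Submodule.exists_starProjection_eqOn_not_finiteDimensional [CompleteSpace E]
    (hE : ¬ FiniteDimensional 𝕜 E) (K : Submodule 𝕜 E) [K.HasOrthogonalProjection]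
    (I : Finset E) :
    ∃ U : Submodule 𝕜 E, ∃ _ : U.HasOrthogonalProjection,
      (∀ x ∈ I, U.starProjection x = K.starProjection x) ∧
        ¬ FiniteDimensional 𝕜 U ∧ ¬ FiniteDimensional 𝕜 Uᗮ := by
  set A := span 𝕜 (K.starProjection '' I)
  set B := span 𝕜 ((fun x => x - K.starProjection x) '' I)
  have : FiniteDimensional 𝕜 A := .span_of_finite 𝕜 (I.finite_toSet.image _)
  have : FiniteDimensional 𝕜 B := .span_of_finite 𝕜 (I.finite_toSet.image _)
  have hAK : A ≤ K :=
    span_le.mpr <| Set.image_subset_iff.mpr fun x _ => K.starProjection_apply_mem x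
  have hBK : B ≤ Kᗮ :=
    span_le.mpr <| Set.image_subset_iff.mpr fun x _ => K.sub_starProjection_mem_orthogonal x
  have hAB : A ⟂ B :=
    isOrtho_iff_le.mpr (hAK.trans ((le_orthogonal_orthogonal K).trans (orthogonal_le hBK)))
  obtain ⟨U, _, hAU, hBU, hU, hU'⟩ := exists_le_le_orthogonal_not_finiteDimensional hE hAB
  refine ⟨U, inferInstance, fun x hx => ?_, hU, hU'⟩
  have hPx : K.starProjection x ∈ U := hAU (subset_span ⟨x, hx, rfl⟩)
  have hQx : x - K.starProjection x ∈ Uᗮ := hBU (subset_span ⟨x, hx, rfl⟩)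
  calc U.starProjection x
      = U.starProjection (K.starProjection x) + U.starProjection (x - K.starProjection x) := by
        rw [← map_add, add_sub_cancel]
    _ = K.starProjection x := by
        rw [starProjection_eq_self_iff.mpr hPx, (starProjection_apply_eq_zero_iff U).mpr hQx,
          add_zero]

theorem IsStarProjection.exists_eqOn_not_finiteDimensional [CompleteSpace E]
    (hE : ¬ FiniteDimensional 𝕜 E) {P : E →L[𝕜] E} (hP : IsStarProjection P) (I : Finset E) :
    ∃ Q : E →L[𝕜] E, IsStarProjection Q ∧ (∀ x ∈ I, Q x = P x) ∧
      ¬ FiniteDimensional 𝕜 (LinearMap.range (Q : E →ₗ[𝕜] E)) ∧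
        ¬ FiniteDimensional 𝕜 (LinearMap.ker (Q : E →ₗ[𝕜] E)) := by
  obtain ⟨K, _, rfl⟩ := isStarProjection_iff_eq_starProjection.mp hP
  obtain ⟨U, _, hUI, hU, hU'⟩ := K.exists_starProjection_eqOn_not_finiteDimensional hE I
  refine ⟨U.starProjection, isStarProjection_starProjection, hUI, ?_, ?_⟩
  · rwa [U.range_starProjection]
  · rwa [U.ker_starProjection]

end InnerProduct

theorem stmt_19 {H : Type*} [NormedAddCommGroup H] [InnerProductSpace ℂ H]
    [CompleteSpace H] (e : HilbertBasis ℕ ℂ H) :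
    letI t : TopologicalSpace
        {P : H →L[ℂ] H // P.comp P = P ∧ ContinuousLinearMap.adjoint P = P} :=
      TopologicalSpace.induced Subtype.val (sot H)
    @Dense _ t
        {P : {P : H →L[ℂ] H // P.comp P = P ∧ ContinuousLinearMap.adjoint P = P} |
          ¬ FiniteDimensional ℂ (LinearMap.range (P.1 : H →ₗ[ℂ] H)) ∧
            ¬ FiniteDimensional ℂ (LinearMap.ker (P.1 : H →ₗ[ℂ] H))} ∧
      @IsGδ _ t
        {P : {P : H →L[ℂ] H // P.comp P = P ∧ ContinuousLinearMap.adjoint P = P} |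
          ¬ FiniteDimensional ℂ (LinearMap.range (P.1 : H →ₗ[ℂ] H)) ∧
            ¬ FiniteDimensional ℂ (LinearMap.ker (P.1 : H →ₗ[ℂ] H))} := by
  rw [show TopologicalSpace.induced Subtype.val (sot H) =
    .induced (fun P => ⇑P.1) Pi.topologicalSpace from induced_compose]
  have hH : ¬ FiniteDimensional ℂ H := fun _ =>
    Module.Finite.not_linearIndependent_of_infinite _ e.orthonormal.linearIndependent
  constructor
  · refine dense_induced_pi_of_forall_finset _ fun P I => ?_
    have hP : IsStarProjection P.1 := ⟨P.2.1, ContinuousLinearMap.isSelfAdjoint_iff'.mpr P.2.2⟩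
    obtain ⟨Q, hQ, hQI, hQ_range, hQ_ker⟩ := hP.exists_eqOn_not_finiteDimensional hH I
    exact ⟨⟨Q, hQ.isIdempotentElem, hQ.isSelfAdjoint.adjoint_eq⟩, ⟨hQ_range, hQ_ker⟩, hQI⟩
  · let _ : TopologicalSpace
        {P : H →L[ℂ] H // P.comp P = P ∧ ContinuousLinearMap.adjoint P = P} :=
      .induced (fun P => ⇑P.1) Pi.topologicalSpace
    exact isGδ_setOf_not_finiteDimensional_range_and_ker_of_continuous_apply
      (fun x => (continuous_apply x).comp continuous_induced_dom)
      fun P => ContinuousLinearMap.IsIdempotentElem.toLinearMap P.2.1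
end
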